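/- arXiv:1509.07749 — 2 statements merged into one kernel-verified Lean document; each statement's English description precedes it below -/
import Mathlib

section
/- Fix real numbers s > 0 and consider the family of slope functions μ_{t'}(x, c, k) = ((1 - s/t')·x + k) / ((s - t'/2)·c) for t' ∈ (0, s), where c > 0 and x, k are real. Suppose x ≥ 0, and suppose for some t ∈ (0, s) that μ_t(x, c_F, k_F) ≤ k/((s - t/2)·c) where c, c_F > 0. Then for all t' with 0 < t' < t: μ_{t'}(x, c_F, k_F) - k/((s - t'/2)·c) ≤ (s·(t'-t)/(t·t'·(s - t'/2)))·(x/c_F) ≤ 0, with equality for some t' < t only if x = 0. -/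
/-!
Moving from `t` to `t'` changes the numerator `(1 - s/t)·x + k_F` by `s(t' - t)/(t t')·x`; what
remains of the slope difference is the difference at `t`, rescaled by the positive factor
`(s - t/2)/(s - t'/2)`, hence nonpositive.
-/

lemma div_le_div_of_div_mul_le_div_mul {a b c d e : ℝ} (hd : 0 < d)
    (h : a / (d * b) ≤ e / (d * c)) : a / b ≤ e / c := by
  rwa [mul_comm d b, mul_comm d c, ← div_div, ← div_div, div_le_div_iff_of_pos_right hd] at h

lemma slope_sub_eq {s t t' x kF k cF c : ℝ} (ht : t ≠ 0) (ht' : t' ≠ 0) :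
    ((1 - s / t') * x + kF) / ((s - t' / 2) * cF) - k / ((s - t' / 2) * c)
      = (((1 - s / t) * x + kF) / cF - k / c) / (s - t' / 2)
        + s * (t' - t) / (t * t' * (s - t' / 2)) * (x / cF) := by
  have hnum : (1 - s / t') * x + kF = (1 - s / t) * x + kF + s * (t' - t) / (t * t') * x := by
    field_simp
    ring
  rw [hnum]
  generalize s - t' / 2 = D
  ring

lemma slope_coeff_neg {s t t' : ℝ} (hs : 0 < s) (ht' : 0 < t') (htt' : t' < t)
    (hD' : 0 < s - t' / 2) : s * (t' - t) / (t * t' * (s - t' / 2)) < 0 :=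
  div_neg_of_neg_of_pos (mul_neg_of_pos_of_neg hs (sub_neg.2 htt'))
    (by have := ht'.trans htt'; positivity)

theorem stmt2_general (s t c cF x kF k : ℝ)
    (ht : 0 < t) (hts : t < s)
    (hcF : 0 < cF) (hx : 0 ≤ x)
    (hslope : ((1 - s / t) * x + kF) / ((s - t / 2) * cF) ≤ k / ((s - t / 2) * c)) :
    ∀ t' : ℝ, 0 < t' → t' < t →
      (((1 - s / t') * x + kF) / ((s - t' / 2) * cF) - k / ((s - t' / 2) * c)
          ≤ (s * (t' - t) / (t * t' * (s - t' / 2))) * (x / cF)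
        ∧ (s * (t' - t) / (t * t' * (s - t' / 2))) * (x / cF) ≤ 0)
      ∧ ((s * (t' - t) / (t * t' * (s - t' / 2))) * (x / cF) = 0 → x = 0) := by
  intro t' ht' htt'
  have hD : 0 < s - t / 2 := by linarith
  have hD' : 0 < s - t' / 2 := by linarith
  have hcoeff := slope_coeff_neg (ht.trans hts) ht' htt' hD'
  have hbase : ((1 - s / t) * x + kF) / cF - k / c ≤ 0 :=
    sub_nonpos.2 (div_le_div_of_div_mul_le_div_mul hD hslope)
  refine ⟨⟨?_, mul_nonpos_of_nonpos_of_nonneg hcoeff.le (div_nonneg hx hcF.le)⟩, fun h => ?_⟩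
  · rw [slope_sub_eq ht.ne' ht'.ne']
    exact add_le_of_nonpos_left (div_nonpos_of_nonpos_of_nonneg hbase hD'.le)
  · have hxcF := (mul_eq_zero.1 h).resolve_left hcoeff.ne
    exact (div_eq_zero_iff.1 hxcF).resolve_right hcF.ne'

/-- Slope computation at the heart of Lemma `adiabstablemma`. -/
theorem stmt2 (s t c cF x kF k : ℝ)
    (hs : 0 < s) (ht : 0 < t) (hts : t < s)
    (hc : 0 < c) (hcF : 0 < cF) (hx : 0 ≤ x)
    (hslope : ((1 - s / t) * x + kF) / ((s - t / 2) * cF) ≤ k / ((s - t / 2) * c)) :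
    ∀ t' : ℝ, 0 < t' → t' < t →
      (((1 - s / t') * x + kF) / ((s - t' / 2) * cF) - k / ((s - t' / 2) * c)
          ≤ (s * (t' - t) / (t * t' * (s - t' / 2))) * (x / cF)
        ∧ (s * (t' - t) / (t * t' * (s - t' / 2))) * (x / cF) ≤ 0)
      ∧ ((s * (t' - t) / (t * t' * (s - t' / 2))) * (x / cF) = 0 → x = 0) :=
  stmt2_general s t c cF x kF k ht hts hcF hx hslope
end

section
/- Let a, b, s, t be real numbers with 0 < t < s, a a nonzero integer. Suppose the class α = a·Ξ + b·f on the lattice with Gram matrix [[-2,1],[1,0]] satisfies α·ω = 0 where ω = t·Ξ + 2s·f. Then b = 2a(1 - s/t), and -α² = 2a²·(2s/t - 1). In particular, if -α² ≤ 2·r·r₁·r₂·δ with 1 ≤ r₁, r₂ ≤ r integers and δ ≥ 0 real, then t/s ≥ 2/(1 + r³δ). -/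
/-! Solving `α·ω = 0` for `b` gives `b = 2a(1 - s/t)`, hence `-α² = 2a²(2s/t - 1)`, which is
nonnegative because `t < s`. As `a` is a nonzero integer, `a² ≥ 1`, and `r r₁ r₂ ≤ r³`, so the
Bogomolov bound gives `2s/t - 1 ≤ r³δ`, which rearranges to `t/s ≥ 2/(1 + r³δ)`. -/

section WallBound

variable {a b s t : ℝ}

theorem coeff_f_eq_of_orthogonal (ht : t ≠ 0) (horth : -2 * a * t + 2 * a * s + b * t = 0) :
    b = 2 * a * (1 - s / t) := by
  field_simp
  linarith

theorem neg_selfIntersection_eq (ht : t ≠ 0) (hb : b = 2 * a * (1 - s / t)) :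
    -((-2) * a ^ 2 + 2 * a * b) = 2 * a ^ 2 * (2 * s / t - 1) := by
  rw [hb]
  field_simp
  ring

theorem two_div_one_add_le_div {c : ℝ} (ht : 0 < t) (hs : 0 < s) (h : 2 * s / t - 1 ≤ c) :
    2 / (1 + c) ≤ t / s := by
  calc 2 / (1 + c) ≤ 2 / (2 * s / t) :=
        div_le_div_of_nonneg_left zero_le_two (by positivity) (by linarith)
    _ = t / s := by field_simp

end WallBound

theorem one_le_intCast_sq {R : Type*} [Ring R] [LinearOrder R] [IsStrictOrderedRing R]
    {a : ℤ} (ha : a ≠ 0) : (1 : R) ≤ (a : R) ^ 2 :=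
  mod_cast (one_le_sq_iff_one_le_abs a).mpr (Int.one_le_abs ha)

theorem mul_mul_le_pow_three {R : Type*} [CommSemiring R] [PartialOrder R] [IsOrderedRing R]
    {r x y : R} (hx : 0 ≤ x) (hxr : x ≤ r) (hy : 0 ≤ y) (hyr : y ≤ r) : r * x * y ≤ r ^ 3 := by
  have hr : 0 ≤ r := hx.trans hxr
  calc r * x * y ≤ r * r * r := by gcongr
    _ = r ^ 3 := by ring

/-- Wall-bound computation of Lemma `wallbound`: for α = aΞ + bf with
α·ω = -2at + 2as + bt = 0 (ω = tΞ + 2sf on the lattice Ξ² = -2, Ξ·f = 1, f² = 0)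
and α² = -2a² + 2ab. -/
theorem stmt10 (a : ℤ) (b s t : ℝ) (ha : a ≠ 0) (ht : 0 < t) (hts : t < s)
    (horth : -2 * (a : ℝ) * t + 2 * (a : ℝ) * s + b * t = 0) :
    b = 2 * (a : ℝ) * (1 - s / t) ∧
    -((-2) * (a : ℝ) ^ 2 + 2 * (a : ℝ) * b) = 2 * (a : ℝ) ^ 2 * (2 * s / t - 1) ∧
    ∀ r r₁ r₂ : ℤ, 1 ≤ r₁ → r₁ ≤ r → 1 ≤ r₂ → r₂ ≤ r →
      ∀ δ : ℝ, 0 ≤ δ →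
        -((-2) * (a : ℝ) ^ 2 + 2 * (a : ℝ) * b) ≤ 2 * (r : ℝ) * r₁ * r₂ * δ →
        t / s ≥ 2 / (1 + (r : ℝ) ^ 3 * δ) := by
  have hb := coeff_f_eq_of_orthogonal ht.ne' horth
  have hα := neg_selfIntersection_eq ht.ne' hb
  refine ⟨hb, hα, fun r r₁ r₂ h₁ h₁r h₂ h₂r δ hδ hbog => ?_⟩
  have hwall : 0 ≤ 2 * s / t - 1 := by
    rw [sub_nonneg, le_div_iff₀ ht]
    linarith
  have hrank : (r : ℝ) * r₁ * r₂ ≤ r ^ 3 :=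
    mod_cast mul_mul_le_pow_three (by omega) h₁r (by omega) h₂r
  apply two_div_one_add_le_div ht (ht.trans hts)
  calc 2 * s / t - 1 ≤ (a : ℝ) ^ 2 * (2 * s / t - 1) :=
        le_mul_of_one_le_left hwall (one_le_intCast_sq ha)
    _ ≤ r * r₁ * r₂ * δ := by linarith
    _ ≤ r ^ 3 * δ := mul_le_mul_of_nonneg_right hrank hδ
end
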